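/- arXiv:2503.07984 — 3 statements merged into one kernel-verified Lean document; each statement's English description precedes it below -/
import Mathlib

section
/- For constants c > 0, α₀ ∈ (0,1), and α_c with 0 < α_c < α₀, the function ũ(a) defined by ũ(a) = ((α₀/2 - 1/(2α₀))·a² - (1/α₀)·a)·c for a ∈ [-1,0] and ũ(a) = -(a/(α₀ - α_c·a))·c for a ∈ (0,1] is strictly concave on [-1,1]. -/
open Set

/-
Both pieces are differentiable up to `a = 0`, where they share the value `0` and the slope
`-c / α₀`, so the glued function is differentiable on `(-1, 1)`. Its derivative is strictly
decreasing: on `[-1, 0]` it is affine with slope `(α₀ - 1 / α₀) c < 0`, and on `[0, 1]` it equals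
`-α₀ c / (α₀ - α_c a)²`, whose denominator decreases and stays positive because `α_c < α₀`.
-/

theorem hasDerivAt_ite_le {f g : ℝ → ℝ} {m x d : ℝ} (hf : x ≤ m → HasDerivAt f d x)
    (hg : m ≤ x → HasDerivAt g d x) (hfg : f m = g m) :
    HasDerivAt (fun y => if y ≤ m then f y else g y) d x := by
  rcases lt_trichotomy x m with hxm | rfl | hmx
  · refine (hf hxm.le).congr_of_eventuallyEq ?_
    filter_upwards [Iio_mem_nhds hxm] with y hy
    exact if_pos (le_of_lt hy)
  · have hleft : HasDerivWithinAt (fun y => if y ≤ x then f y else g y) d (Iic x) x :=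
      (hf le_rfl).hasDerivWithinAt.congr (fun y hy => if_pos hy) (if_pos le_rfl)
    have hright : HasDerivWithinAt (fun y => if y ≤ x then f y else g y) d (Ici x) x := by
      refine (hg le_rfl).hasDerivWithinAt.congr (fun y hy => ?_) (by simp [hfg])
      rcases (mem_Ici.mp hy).eq_or_lt with rfl | hxy
      · simp [hfg]
      · exact if_neg (not_le.mpr hxy)
    simpa [Iic_union_Ici] using hleft.union hright
  · refine (hg hmx.le).congr_of_eventuallyEq ?_
    filter_upwards [Ioi_mem_nhds hmx] with y hy
    exact if_neg (not_le.mpr hy)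

theorem strictConcaveOn_Icc_ite_le_of_hasDerivAt {a m b : ℝ} {f g f' g' : ℝ → ℝ}
    (ham : a ≤ m) (hmb : m ≤ b)
    (hf : ∀ x ∈ Icc a m, HasDerivAt f (f' x) x) (hg : ∀ x ∈ Icc m b, HasDerivAt g (g' x) x)
    (hfg : f m = g m) (hfg' : f' m = g' m)
    (hf' : StrictAntiOn f' (Icc a m)) (hg' : StrictAntiOn g' (Icc m b)) :
    StrictConcaveOn ℝ (Icc a b) (fun x => if x ≤ m then f x else g x) := by
  set u' : ℝ → ℝ := fun x => if x ≤ m then f' x else g' x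
  have hderiv : ∀ x ∈ Icc a b, HasDerivAt (fun x => if x ≤ m then f x else g x) (u' x) x := by
    rintro x ⟨hax, hxb⟩
    refine hasDerivAt_ite_le (fun hxm => ?_) (fun hmx => ?_) hfg
    · simpa [u', hxm] using hf x ⟨hax, hxm⟩
    · rcases hmx.eq_or_lt with rfl | hmx
      · simpa [u', hfg'] using hg _ ⟨le_rfl, hxb⟩
      · simpa [u', not_le.mpr hmx] using hg x ⟨hmx.le, hxb⟩
  have hu' : StrictAntiOn u' (Icc a b) := by
    have hleft : StrictAntiOn u' (Icc a m) :=
      hf'.congr fun x hx => (if_pos hx.2).symm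
    have hright : StrictAntiOn u' (Icc m b) := by
      refine hg'.congr fun x hx => ?_
      rcases hx.1.eq_or_lt with rfl | hmx
      · simp [u', hfg']
      · exact (if_neg (not_le.mpr hmx)).symm
    simpa [Icc_union_Icc_eq_Icc ham hmb] using
      hleft.union hright (isGreatest_Icc ham) (isLeast_Icc hmb)
  refine StrictAntiOn.strictConcaveOn_of_deriv (convex_Icc a b)
    (fun x hx => (hderiv x hx).continuousAt.continuousWithinAt) ?_
  rw [interior_Icc]
  exact (hu'.mono Ioo_subset_Icc_self).congr fun x hx =>
    ((hderiv x (Ioo_subset_Icc_self hx)).deriv).symm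

theorem hasDerivAt_quadratic_mul (A B c a : ℝ) :
    HasDerivAt (fun x : ℝ => (A * x ^ 2 - B * x) * c) ((2 * A * a - B) * c) a := by
  refine ((((hasDerivAt_pow 2 a).const_mul A).sub
    ((hasDerivAt_id a).const_mul B)).mul_const c).congr_deriv ?_
  ring

theorem strictAnti_affine_mul {A B c : ℝ} (h : A * c < 0) :
    StrictAnti fun x : ℝ => (2 * A * x - B) * c := by
  intro x y hxy
  nlinarith

theorem hasDerivAt_neg_div_sub_mul {p q c a : ℝ} (ha : p - q * a ≠ 0) :
    HasDerivAt (fun x : ℝ => -(x / (p - q * x)) * c) (-(p / (p - q * a) ^ 2) * c) a := by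
  have hden : HasDerivAt (fun x : ℝ => p - q * x) (-q) a := by
    simpa using ((hasDerivAt_id a).const_mul q).const_sub p
  refine ((((hasDerivAt_id a).div hden ha).neg).mul_const c).congr_deriv ?_
  simp only [id_eq]
  ring

theorem strictAntiOn_neg_div_sq_sub_mul {p q c : ℝ} (hp : 0 < p) (hq : 0 < q) (hc : 0 < c) :
    StrictAntiOn (fun x : ℝ => -(p / (p - q * x) ^ 2) * c) (Iio (p / q)) := by
  intro x hx y hy hxy
  have hy' : 0 < p - q * y := by
    rw [mem_Iio, lt_div_iff₀ hq] at hy; linarith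
  have hyx : p - q * y < p - q * x := by nlinarith
  have : p / (p - q * x) ^ 2 < p / (p - q * y) ^ 2 :=
    div_lt_div_of_pos_left hp (by positivity) (pow_lt_pow_left₀ hyx hy'.le two_ne_zero)
  nlinarith

/-- The auxiliary function ũ is strictly concave on [-1,1]. -/
theorem util_strictConcave (α₀ αc c : ℝ) (hα₀ : α₀ ∈ Set.Ioo (0:ℝ) 1)
    (hαc : 0 < αc) (hcα : αc < α₀) (hc : 0 < c) :
    StrictConcaveOn ℝ (Set.Icc (-1 : ℝ) 1)
      (fun a : ℝ => if a ≤ 0 then ((α₀ / 2 - 1 / (2 * α₀)) * a ^ 2 - (1 / α₀) * a) * c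
        else -(a / (α₀ - αc * a)) * c) := by
  obtain ⟨hα₀pos, hα₀lt⟩ := hα₀
  have hA : (α₀ / 2 - 1 / (2 * α₀)) * c < 0 := by
    refine mul_neg_of_neg_of_pos ?_ hc
    rw [show α₀ / 2 - 1 / (2 * α₀) = (α₀ ^ 2 - 1) / (2 * α₀) by field_simp]
    exact div_neg_of_neg_of_pos (by nlinarith) (by positivity)
  have hpole : Icc (0 : ℝ) 1 ⊆ Iio (α₀ / αc) := fun x hx => by
    rw [mem_Iio, lt_div_iff₀ hαc]; nlinarith [hx.2]
  refine strictConcaveOn_Icc_ite_le_of_hasDerivAt (by norm_num) zero_le_one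
    (fun x _ => hasDerivAt_quadratic_mul _ _ c x)
    (fun x hx => hasDerivAt_neg_div_sub_mul ?_) (by simp) (by simp [sq])
    ((strictAnti_affine_mul hA).strictAntiOn _)
    ((strictAntiOn_neg_div_sq_sub_mul hα₀pos hαc hc).mono hpole)
  have hx' := hpole hx
  rw [mem_Iio, lt_div_iff₀ hαc] at hx'
  linarith
end

section
/- For constants c > 0, α₀ ∈ (0,1), α_c > 0, α_d > 0 with α₀ - α_c > 0 and α₀ - α_d > 0, the payoff function u(a) defined by u(a) = -(α₀ + α_d·a)·a·c for a ∈ [-1,0] and u(a) = -(a/(α₀ - α_c·a))·c for a ∈ (0,1] satisfies u(a) = min(ū(a), ũ(a)) for all a ∈ [-1,1], where ū and ũ are the auxiliary functions ū(a) = -(α₀ + α_d·a)·a·c on [-1,0], ū(a) = ((α₀/2 - 1/(2α₀))·a² - α₀·a)·c on (0,1], and ũ(a) = ((α₀/2 - 1/(2α₀))·a² - (1/α₀)·a)·c on [-1,0], ũ(a) = -(a/(α₀ - α_c·a))·c on (0,1]. -/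
/-- The payoff function u equals the pointwise minimum of the auxiliary
functions ū and ũ on [-1,1]. -/
theorem payoff_eq_min (α₀ αc αd c : ℝ) (hα₀ : α₀ ∈ Set.Ioo (0:ℝ) 1)
    (hαc : 0 < αc) (hαd : 0 < αd) (hcα : 0 < α₀ - αc) (hdα : 0 < α₀ - αd)
    (hc : 0 < c) :
    ∀ a ∈ Set.Icc (-1 : ℝ) 1,
      (if a ≤ 0 then -(α₀ + αd * a) * a * c else -(a / (α₀ - αc * a)) * c) =
        min
          (if a ≤ 0 then -(α₀ + αd * a) * a * c
            else ((α₀ / 2 - 1 / (2 * α₀)) * a ^ 2 - α₀ * a) * c)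
          (if a ≤ 0 then ((α₀ / 2 - 1 / (2 * α₀)) * a ^ 2 - (1 / α₀) * a) * c
            else -(a / (α₀ - αc * a)) * c) := by
  obtain ⟨h0, h1⟩ := hα₀
  have h2 : (0:ℝ) < 2 * α₀ := by linarith
  have hsq : 0 ≤ 1 - α₀ ^ 2 := by nlinarith
  intro a ⟨ha1, ha2⟩
  by_cases h : a ≤ 0
  · simp only [if_pos h]
    rw [min_eq_left]
    apply mul_le_mul_of_nonneg_right _ hc.le
    have eR : (α₀ / 2 - 1 / (2 * α₀)) * a ^ 2 - (1 / α₀) * a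
        = ((α₀ ^ 2 - 1) * a ^ 2 - 2 * a) / (2 * α₀) := by
      field_simp
    rw [eR, le_div_iff₀ h2]
    nlinarith [mul_nonneg (neg_nonneg.2 h)
        (mul_nonneg hsq (by linarith : (0:ℝ) ≤ a + 2)),
      mul_nonneg (mul_pos hαd h0).le (sq_nonneg a)]
  · simp only [if_neg h]
    push_neg at h
    rw [min_eq_right]
    apply mul_le_mul_of_nonneg_right _ hc.le
    have hD : 0 < α₀ - αc * a := by nlinarith
    have hstep : -(a / (α₀ - αc * a)) ≤ -(a / α₀) := by
      apply neg_le_neg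
      apply div_le_div_of_nonneg_left h.le hD
      nlinarith
    refine hstep.trans ?_
    have eR : (α₀ / 2 - 1 / (2 * α₀)) * a ^ 2 - α₀ * a
        = (a * ((1 - α₀ ^ 2) * (2 - a))) / (2 * α₀) - a / α₀ := by
      field_simp; ring
    rw [eR]
    have hnn : 0 ≤ a * ((1 - α₀ ^ 2) * (2 - a)) :=
      mul_nonneg h.le (mul_nonneg hsq (by linarith))
    have := div_nonneg hnn h2.le
    linarith
end

section
/- For constants c > 0, α₀ ∈ (0,1), α_c > 0, α_d > 0 with α₀ - α_c > 0 and α₀ - α_d > 0, the function u(a) = -(α₀ + α_d·a)·a·c for a ∈ [-1,0] and u(a) = -(a/(α₀ - α_c·a))·c for a ∈ (0,1] is strictly concave on [-1,1]. -/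
/-!
Both pieces are strictly concave: the secant slopes are `-c (α₀ + α_d (p + q))` on the discharge side
and `-c α₀ / ((α₀ - α_c p) (α₀ - α_c q))` on the charge side, and both decrease. At the kink `a = 0`
the slope drops from `-c α₀` (from the left) to at most `-c / α₀` (to the right), which is smaller
because `α₀ < 1`; a strict drop of the secant slopes across the kink glues the two pieces into one
strictly concave function.
-/

open Set

section Gluing

variable {𝕜 : Type*} [Field 𝕜] [LinearOrder 𝕜] [IsStrictOrderedRing 𝕜] {f : 𝕜 → 𝕜}
  {a b c K : 𝕜}

theorem slope_lt_of_slope_lt_of_slope_lt (hab : a < b) (hbc : b < c)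
    (h₁ : (f b - f a) / (b - a) < K) (h₂ : (f c - f b) / (c - b) < K) :
    (f c - f a) / (c - a) < K := by
  rw [div_lt_iff₀ (sub_pos.2 hab)] at h₁
  rw [div_lt_iff₀ (sub_pos.2 hbc)] at h₂
  rw [div_lt_iff₀ (sub_pos.2 (hab.trans hbc))]
  linarith

theorem lt_slope_of_lt_slope_of_lt_slope (hab : a < b) (hbc : b < c)
    (h₁ : K < (f b - f a) / (b - a)) (h₂ : K < (f c - f b) / (c - b)) :
    K < (f c - f a) / (c - a) := by
  rw [lt_div_iff₀ (sub_pos.2 hab)] at h₁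
  rw [lt_div_iff₀ (sub_pos.2 hbc)] at h₂
  rw [lt_div_iff₀ (sub_pos.2 (hab.trans hbc))]
  linarith

theorem strictConcaveOn_of_inter_Iic_of_inter_Ici {s : Set 𝕜} {m : 𝕜} (hs : Convex 𝕜 s)
    (hl : StrictConcaveOn 𝕜 (s ∩ Iic m) f) (hr : StrictConcaveOn 𝕜 (s ∩ Ici m) f)
    (hm : ∀ x ∈ s, ∀ z ∈ s, x < m → m < z →
      (f z - f m) / (z - m) < (f m - f x) / (m - x)) :
    StrictConcaveOn 𝕜 s f := by
  refine strictConcaveOn_of_slope_strict_anti_adjacent hs fun {x y z} hx hz hxy hyz => ?_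
  have hy : y ∈ s := hs.ordConnected.out hx hz ⟨hxy.le, hyz.le⟩
  rcases le_or_gt z m with hzm | hmz
  · exact hl.slope_anti_adjacent ⟨hx, (hxy.trans hyz).le.trans hzm⟩ ⟨hz, hzm⟩ hxy hyz
  rcases le_or_gt m x with hmx | hxm
  · exact hr.slope_anti_adjacent ⟨hx, hmx⟩ ⟨hz, hmx.trans (hxy.trans hyz).le⟩ hxy hyz
  have hms : m ∈ s := hs.ordConnected.out hx hz ⟨hxm.le, hmz.le⟩
  rcases lt_trichotomy y m with hym | rfl | hmy
  · have hxy_ym := hl.slope_anti_adjacent ⟨hx, hxm.le⟩ ⟨hms, le_rfl⟩ hxy hym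
    exact slope_lt_of_slope_lt_of_slope_lt hym hmz hxy_ym ((hm y hy z hz hym hmz).trans hxy_ym)
  · exact hm x hx z hz hxy hyz
  · have hmy_yz := hr.slope_anti_adjacent ⟨hms, le_rfl⟩ ⟨hz, (hmy.trans hyz).le⟩ hmy hyz
    exact lt_slope_of_lt_slope_of_lt_slope hxm hmy (hmy_yz.trans (hm x hx y hy hxm hmy)) hmy_yz

end Gluing

section Payoff

variable {α₀ αc αd c : ℝ}

/- The two branches of `u`, `-η(a) a c` for `a ≤ 0` and `-(a / η(a)) c` for `a > 0`. -/
def dischargePayoff (α₀ αd c a : ℝ) : ℝ := -(α₀ + αd * a) * a * c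

noncomputable def chargePayoff (α₀ αc c a : ℝ) : ℝ := -(a / (α₀ - αc * a)) * c

theorem dischargePayoff_slope {p q : ℝ} (hpq : p ≠ q) :
    (dischargePayoff α₀ αd c q - dischargePayoff α₀ αd c p) / (q - p) =
      -(c * (α₀ + αd * (p + q))) := by
  rw [div_eq_iff (sub_ne_zero.2 hpq.symm)]
  unfold dischargePayoff
  ring

theorem chargePayoff_slope {p q : ℝ} (hp : 0 < α₀ - αc * p) (hq : 0 < α₀ - αc * q)
    (hpq : p ≠ q) :
    (chargePayoff α₀ αc c q - chargePayoff α₀ αc c p) / (q - p) =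
      -(c * α₀) / ((α₀ - αc * p) * (α₀ - αc * q)) := by
  rw [div_eq_div_iff (sub_ne_zero.2 hpq.symm) (mul_pos hp hq).ne']
  unfold chargePayoff
  linear_combination (-c * (α₀ - αc * p)) * div_mul_cancel₀ q hq.ne' +
    (c * (α₀ - αc * q)) * div_mul_cancel₀ p hp.ne'

theorem strictConcaveOn_dischargePayoff (hαd : 0 < αd) (hc : 0 < c) :
    StrictConcaveOn ℝ univ (dischargePayoff α₀ αd c) := by
  refine strictConcaveOn_of_slope_strict_anti_adjacent convex_univ fun {x y z} _ _ hxy hyz => ?_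
  rw [dischargePayoff_slope hxy.ne, dischargePayoff_slope hyz.ne]
  have := mul_lt_mul_of_pos_left (hxy.trans hyz) (mul_pos hc hαd)
  linarith

theorem strictConcaveOn_chargePayoff (hα₀ : 0 < α₀) (hαc : 0 < αc) (hc : 0 < c) :
    StrictConcaveOn ℝ (Iio (α₀ / αc)) (chargePayoff α₀ αc c) := by
  have hD : ∀ a ∈ Iio (α₀ / αc), 0 < α₀ - αc * a := fun a ha =>
    sub_pos.2 (by rw [mem_Iio, lt_div_iff₀ hαc] at ha; linarith)
  refine strictConcaveOn_of_slope_strict_anti_adjacent (convex_Iio _)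
    fun {x y z} hx hz hxy hyz => ?_
  have hy : y ∈ Iio (α₀ / αc) := hyz.trans hz
  rw [chargePayoff_slope (hD x hx) (hD y hy) hxy.ne, chargePayoff_slope (hD y hy) (hD z hz) hyz.ne,
    neg_div, neg_div, neg_lt_neg_iff, div_lt_div_iff_of_pos_left (mul_pos hc hα₀)
      (mul_pos (hD x hx) (hD y hy)) (mul_pos (hD y hy) (hD z hz)), mul_comm]
  exact mul_lt_mul_of_pos_right (by nlinarith) (hD y hy)

theorem chargePayoff_div_lt_dischargePayoff_div (hα₀ : α₀ < 1) (hαc : 0 ≤ αc) (hαd : 0 ≤ αd)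
    (hc : 0 < c) {x z : ℝ} (hx : x < 0) (hz : 0 < z) (hDz : 0 < α₀ - αc * z) :
    chargePayoff α₀ αc c z / z < dischargePayoff α₀ αd c x / x := by
  have hcharge : chargePayoff α₀ αc c z / z = -c / (α₀ - αc * z) := by
    unfold chargePayoff
    field_simp
  have hdischarge : dischargePayoff α₀ αd c x / x = -(α₀ + αd * x) * c := by
    unfold dischargePayoff
    field_simp [hx.ne]
  have hprod : α₀ * (α₀ - αc * z) < 1 := by nlinarith [mul_nonneg hαc hz.le]
  rw [hcharge, hdischarge]
  calc -c / (α₀ - αc * z) < -(α₀ * c) := by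
        rw [div_lt_iff₀ hDz]
        nlinarith [mul_lt_mul_of_pos_left hprod hc]
    _ ≤ -(α₀ + αd * x) * c := by nlinarith [mul_nonneg hc.le (mul_nonneg hαd (neg_nonneg.2 hx.le))]

end Payoff

theorem payoff_strictConcave_general (α₀ αc αd c : ℝ) (hα₀ : α₀ ∈ Set.Ioo (0:ℝ) 1)
    (hαc : 0 < αc) (hαd : 0 < αd) (hcα : 0 < α₀ - αc)
    (hc : 0 < c) :
    StrictConcaveOn ℝ (Set.Icc (-1 : ℝ) 1)
      (fun a : ℝ => if a ≤ 0 then -(α₀ + αd * a) * a * c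
        else -(a / (α₀ - αc * a)) * c) := by
  have hD : ∀ a ≤ 1, 0 < α₀ - αc * a := fun a ha => by nlinarith
  refine strictConcaveOn_of_inter_Iic_of_inter_Ici (m := 0) (convex_Icc _ _) ?_ ?_ ?_
  · refine ((strictConcaveOn_dischargePayoff (α₀ := α₀) hαd hc).subset (subset_univ _)
      ((convex_Icc _ _).inter (convex_Iic 0))).congr fun a ha => ?_
    simp [dischargePayoff, ha.2.out]
  · have hsub : Icc (-1 : ℝ) 1 ∩ Ici 0 ⊆ Iio (α₀ / αc) := fun a ha =>
      (lt_div_iff₀ hαc).2 (by linarith [hD a ha.1.2])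
    refine ((strictConcaveOn_chargePayoff hα₀.1 hαc hc).subset hsub
      ((convex_Icc _ _).inter (convex_Ici 0))).congr fun a ha => ?_
    rcases ha.2.out.eq_or_lt with rfl | ha0
    · simp [chargePayoff]
    · simp [chargePayoff, not_le.2 ha0]
  · intro x _ z hz hx0 hz0
    have key := chargePayoff_div_lt_dischargePayoff_div hα₀.2 hαc.le hαd.le hc hx0 hz0 (hD z hz.2)
    simp only [le_refl, if_pos, if_pos hx0.le, if_neg (not_le.2 hz0)]
    rw [mul_zero, zero_mul, sub_zero, sub_zero, zero_sub, zero_sub, neg_div_neg_eq]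
    exact key

/-- The prosumer's single-stage payoff u is strictly concave on [-1,1]. -/
theorem payoff_strictConcave (α₀ αc αd c : ℝ) (hα₀ : α₀ ∈ Set.Ioo (0:ℝ) 1)
    (hαc : 0 < αc) (hαd : 0 < αd) (hcα : 0 < α₀ - αc) (hdα : 0 < α₀ - αd)
    (hc : 0 < c) :
    StrictConcaveOn ℝ (Set.Icc (-1 : ℝ) 1)
      (fun a : ℝ => if a ≤ 0 then -(α₀ + αd * a) * a * c
        else -(a / (α₀ - αc * a)) * c) :=
  payoff_strictConcave_general α₀ αc αd c hα₀ hαc hαd hcα hc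
end
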